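/- arXiv:1503.00458 — 3 statements merged into one kernel-verified Lean document; each statement's English description precedes it below -/
import Mathlib

section
/- A set of vertices S of a graph G is t-convex if and only if S is m-convex and P3-convex. -/
open Set

variable {V : Type*}

/-- `p` is a triangle path: a path with no edge joining vertices at index
distance greater than 2 along the path. -/
def TPath (G : SimpleGraph V) {u v : V} (p : G.Walk u v) : Prop :=
  p.IsPath ∧ ∀ i j : ℕ, i + 2 < j →
    ∀ (hi : i < p.support.length) (hj : j < p.support.length),
      ¬ G.Adj (p.support.get ⟨i, hi⟩) (p.support.get ⟨j, hj⟩)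

/-- `p` is a monophonic (induced) path: a path with no edge joining vertices at
index distance greater than 1 along the path. -/
def MPath (G : SimpleGraph V) {u v : V} (p : G.Walk u v) : Prop :=
  p.IsPath ∧ ∀ i j : ℕ, i + 1 < j →
    ∀ (hi : i < p.support.length) (hj : j < p.support.length),
      ¬ G.Adj (p.support.get ⟨i, hi⟩) (p.support.get ⟨j, hj⟩)

/-- `p` is a geodesic (shortest path). -/
def GPath (G : SimpleGraph V) {u v : V} (p : G.Walk u v) : Prop :=
  p.IsPath ∧ ∀ q : G.Walk u v, p.length ≤ q.length

/-- `S` is convex in the triangle path convexity. -/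
def TConvex (G : SimpleGraph V) (S : Set V) : Prop :=
  ∀ ⦃u v : V⦄, u ∈ S → v ∈ S → ∀ p : G.Walk u v, TPath G p → ∀ w ∈ p.support, w ∈ S

/-- `S` is convex in the monophonic convexity. -/
def MConvex (G : SimpleGraph V) (S : Set V) : Prop :=
  ∀ ⦃u v : V⦄, u ∈ S → v ∈ S → ∀ p : G.Walk u v, MPath G p → ∀ w ∈ p.support, w ∈ S

/-- `S` is convex in the geodetic convexity. -/
def GConvex (G : SimpleGraph V) (S : Set V) : Prop :=
  ∀ ⦃u v : V⦄, u ∈ S → v ∈ S → ∀ p : G.Walk u v, GPath G p → ∀ w ∈ p.support, w ∈ S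

/-- `S` is `P₃`-convex: no vertex outside `S` has two neighbours in `S`. -/
def P3Convex (G : SimpleGraph V) (S : Set V) : Prop :=
  ∀ w ∉ S, ∀ a ∈ S, ∀ b ∈ S, G.Adj w a → G.Adj w b → a = b

/-- The triangle path interval of `S`. -/
def TInterval (G : SimpleGraph V) (S : Set V) : Set V :=
  S ∪ {w | ∃ u ∈ S, ∃ v ∈ S, ∃ p : G.Walk u v, TPath G p ∧ w ∈ p.support}

/-- The monophonic interval of `S`. -/
def MInterval (G : SimpleGraph V) (S : Set V) : Set V :=
  S ∪ {w | ∃ u ∈ S, ∃ v ∈ S, ∃ p : G.Walk u v, MPath G p ∧ w ∈ p.support}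

/-- The geodetic interval of `S`. -/
def GInterval (G : SimpleGraph V) (S : Set V) : Set V :=
  S ∪ {w | ∃ u ∈ S, ∃ v ∈ S, ∃ p : G.Walk u v, GPath G p ∧ w ∈ p.support}

/-- The `P₃`-interval of `S`: `S` together with the vertices having at least two
neighbours in `S`. -/
def P3Interval (G : SimpleGraph V) (S : Set V) : Set V :=
  S ∪ {w | w ∉ S ∧ ∃ a ∈ S, ∃ b ∈ S, a ≠ b ∧ G.Adj w a ∧ G.Adj w b}

/-- The convex hull of `S` in the triangle path convexity. -/
def THull (G : SimpleGraph V) (S : Set V) : Set V :=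
  ⋂₀ {C : Set V | S ⊆ C ∧ TConvex G C}

/-- The convex hull of `S` in the monophonic convexity. -/
def MHull (G : SimpleGraph V) (S : Set V) : Set V :=
  ⋂₀ {C : Set V | S ⊆ C ∧ MConvex G C}

/-- The convex hull of `S` in the geodetic convexity. -/
def GHull (G : SimpleGraph V) (S : Set V) : Set V :=
  ⋂₀ {C : Set V | S ⊆ C ∧ GConvex G C}

/-- `K` separates the vertices `a` and `b`: both lie outside `K` and every walk
between them meets `K`. -/
def Separates (G : SimpleGraph V) (K : Set V) (a b : V) : Prop :=
  a ∉ K ∧ b ∉ K ∧ ∀ p : G.Walk a b, ∃ w ∈ p.support, w ∈ K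

/-- `K` is a separator of `G`. -/
def IsSeparator (G : SimpleGraph V) (K : Set V) : Prop :=
  ∃ a b : V, Separates G K a b

/-- `G` is prime: it has no clique separator. -/
def IsPrime (G : SimpleGraph V) : Prop :=
  ¬ ∃ C : Set V, G.IsClique C ∧ IsSeparator G C

/-- `K` is a minimal separator for `a` and `b`. -/
def IsMinSeparator (G : SimpleGraph V) (K : Set V) (a b : V) : Prop :=
  Separates G K a b ∧ ∀ K' : Set V, K' ⊂ K → ¬ Separates G K' a b

/-- `W` induces a maximal prime subgraph of `G`. -/
def IsMPSubgraph (G : SimpleGraph V) (W : Set V) : Prop :=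
  IsPrime (G.induce W) ∧ ∀ W' : Set V, W ⊆ W' → IsPrime (G.induce W') → W' = W

/-- `C` is the vertex set of a connected component of `G - S`. -/
def IsCompOf (G : SimpleGraph V) (S C : Set V) : Prop :=
  C.Nonempty ∧ C ∩ S = ∅ ∧
  (∀ x ∈ C, ∀ y ∈ C, ∃ p : G.Walk x y, ∀ w ∈ p.support, w ∈ C) ∧
  (∀ x ∈ C, ∀ y : V, y ∉ S → G.Adj x y → y ∈ C)

/-!
A triangle path `v₀, …, vₙ` that is not induced has a chord `vᵢvᵢ₊₂`. Skipping `vᵢ₊₁` gives a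
shorter triangle path with the same ends, so by induction on the length all its vertices lie in
`S`; then `vᵢ₊₁` has the two distinct neighbours `vᵢ, vᵢ₊₂` in `S`, and `P₃`-convexity puts it
in `S` too. Conversely, induced paths are triangle paths, and so is every path `a, w, b`.
-/

namespace List

variable {α : Type*}

/-- For the support of a path and `r = G.Adj`, the case `k = 1` says the path is induced and
`k = 2` that it is a triangle path. -/
def NoFarChord (r : α → α → Prop) (k : ℕ) (l : List α) : Prop :=
  ∀ i j : ℕ, i + k < j → ∀ (hi : i < l.length) (hj : j < l.length), ¬ r l[i] l[j]

variable {r : α → α → Prop} {k : ℕ} {l : List α}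

theorem NoFarChord.mono {k' : ℕ} (h : l.NoFarChord r k) (hk : k ≤ k') : l.NoFarChord r k' :=
  fun i j hij => h i j (by omega)

theorem NoFarChord.sublist {l' : List α} (h : l.NoFarChord r k) (hl : l' <+ l) :
    l'.NoFarChord r k := by
  obtain ⟨f, hf⟩ := sublist_iff_exists_orderEmbedding_getElem?_eq.mp hl
  intro i j hij hi hj
  have hfi := hf i
  have hfj := hf j
  rw [getElem?_eq_getElem hi, eq_comm, getElem?_eq_some_iff] at hfi
  rw [getElem?_eq_getElem hj, eq_comm, getElem?_eq_some_iff] at hfj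
  obtain ⟨hfi, hei⟩ := hfi
  obtain ⟨hfj, hej⟩ := hfj
  rw [← hei, ← hej]
  have hspread : j - i + f i ≤ f j := by
    simpa [Nat.sub_add_cancel (by omega : i ≤ j)] using f.strictMono.add_le_nat (j - i) i
  exact h (f i) (f j) (by omega) hfi hfj

theorem exists_chord_of_not_noFarChord (h : l.NoFarChord r (k + 1)) (h' : ¬ l.NoFarChord r k) :
    ∃ i, ∃ hi : i + k + 1 < l.length, r l[i] l[i + k + 1] := by
  by_contra! hc
  refine h' fun i j hij hi hj => ?_
  rcases (show j = i + k + 1 ∨ i + (k + 1) < j by omega) with rfl | hlt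
  · exact hc i hj
  · exact h i j hlt hi hj

end List

namespace SimpleGraph.Walk

variable {G : SimpleGraph V}

theorem adj_support_getElem {u v : V} (p : G.Walk u v) {i : ℕ} (hi : i + 1 < p.support.length) :
    G.Adj p.support[i] p.support[i + 1] :=
  List.isChain_iff_getElem.mp p.isChain_adj_support i hi

theorem exists_support_eq_eraseIdx :
    ∀ (i : ℕ) {u v : V} (p : G.Walk u v) (hi : i + 2 < p.support.length),
      G.Adj p.support[i] p.support[i + 2] →
      ∃ q : G.Walk u v, q.support = p.support.eraseIdx (i + 1)
  | 0, _, _, .cons _ (.cons _ r), _, hadj => ⟨.cons (by cases r <;> simpa using hadj) r, by simp⟩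
  | i + 1, _, _, .cons h r, hi, hadj => by
    obtain ⟨q, hq⟩ := exists_support_eq_eraseIdx i r (by simpa using hi) (by simpa using hadj)
    exact ⟨.cons h q, by simp [hq]⟩

end SimpleGraph.Walk

section Convexity

variable {G : SimpleGraph V} {S : Set V}

theorem MPath.tPath {u v : V} {p : G.Walk u v} (hp : MPath G p) : TPath G p :=
  ⟨hp.1, List.NoFarChord.mono hp.2 (by norm_num)⟩

theorem TPath.exists_eraseIdx_of_not_mPath {u v : V} {p : G.Walk u v} (hp : TPath G p)
    (hm : ¬ MPath G p) : ∃ i, ∃ _ : i + 2 < p.support.length, ∃ q : G.Walk u v,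
      TPath G q ∧ q.support = p.support.eraseIdx (i + 1) := by
  obtain ⟨i, hi, hadj⟩ :=
    List.exists_chord_of_not_noFarChord (k := 1) hp.2 fun h => hm ⟨hp.1, h⟩
  obtain ⟨q, hq⟩ := p.exists_support_eq_eraseIdx i hi hadj
  have hsub : q.support.Sublist p.support := hq ▸ List.eraseIdx_sublist _ _
  exact ⟨i, hi, q, ⟨SimpleGraph.Walk.isPath_def _ |>.mpr (hp.1.support_nodup.sublist hsub),
    List.NoFarChord.sublist hp.2 hsub⟩, hq⟩

theorem TConvex.mConvex (h : TConvex G S) : MConvex G S :=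
  fun _ _ hu hv p hp => h hu hv p hp.tPath

theorem TConvex.p3Convex (h : TConvex G S) : P3Convex G S := by
  intro w hw a ha b hb hwa hwb
  by_contra hab
  let p : G.Walk a b := .cons hwa.symm (.cons hwb .nil)
  have hp : TPath G p :=
    ⟨by simp [p, SimpleGraph.Walk.isPath_def, hwa.ne', hwb.ne, hab],
      fun i j hij hi hj => by simp [p] at hj; omega⟩
  exact hw (h ha hb p hp w (by simp [p]))

theorem TPath.support_subset_of_mConvex_of_p3Convex (hM : MConvex G S) (hP : P3Convex G S)
    {u v : V} (hu : u ∈ S) (hv : v ∈ S) {p : G.Walk u v} (hp : TPath G p) :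
    ∀ w ∈ p.support, w ∈ S := by
  by_cases hm : MPath G p
  · exact hM hu hv p hm
  obtain ⟨i, hi, q, hq, hsupp⟩ := hp.exists_eraseIdx_of_not_mPath hm
  have hlt : q.length < p.length := by
    have hlen := congrArg List.length hsupp
    rw [List.length_eraseIdx_of_lt (by omega)] at hlen
    simp only [SimpleGraph.Walk.length_support] at hlen hi
    omega
  have hqS := hq.support_subset_of_mConvex_of_p3Convex hM hP hu hv
  have hoff : ∀ j (hj : j < p.support.length), j ≠ i + 1 → p.support[j] ∈ S :=
    fun j hj hne => hqS _ (hsupp ▸ List.mem_eraseIdx_iff_getElem.mpr ⟨j, hj, hne, rfl⟩)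
  have hmid : p.support[i + 1] ∈ S := by
    by_contra hout
    have heq := hP _ hout _ (hoff i (by omega) (by omega)) _ (hoff (i + 2) hi (by omega))
      (p.adj_support_getElem (by omega)).symm (p.adj_support_getElem hi)
    rw [hp.1.support_nodup.getElem_inj_iff] at heq
    omega
  intro w hw
  obtain ⟨j, hj, rfl⟩ := List.getElem_of_mem hw
  by_cases hji : j = i + 1
  · subst hji
    exact hmid
  · exact hoff j hj hji
termination_by p.length

theorem TConvex.of_mConvex_of_p3Convex (hM : MConvex G S) (hP : P3Convex G S) : TConvex G S :=
  fun _ _ hu hv _ hp => hp.support_subset_of_mConvex_of_p3Convex hM hP hu hv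

end Convexity

theorem stmt_1_general (G : SimpleGraph V) (S : Set V) :
    TConvex G S ↔ MConvex G S ∧ P3Convex G S :=
  ⟨fun h => ⟨h.mConvex, h.p3Convex⟩, fun h => .of_mConvex_of_p3Convex h.1 h.2⟩

theorem stmt_1 [Fintype V] (G : SimpleGraph V) (S : Set V) :
    TConvex G S ↔ MConvex G S ∧ P3Convex G S :=
  stmt_1_general G S
end

section
/- If G is a connected prime graph (i.e., G has no clique separator) and u, v are two non-adjacent vertices of G, then {u, v} is a monophonic hull set of G: the monophonic convex hull of {u, v} equals V(G). -/
open Set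

variable {V : Type*}

/-!
Let `H` be an m-convex set containing two non-adjacent vertices `u, v`, and suppose some `x ∉ H`.
Let `C` be the set of vertices reachable from `x` outside `H`, and `K` the set of vertices of `H`
with a neighbour in `C`. Two non-adjacent vertices of `K` would be joined through `C` by a walk,
which shortens to an induced path whose inner vertices avoid `H`, contradicting convexity; so `K`
is a clique. It separates `x` from every vertex of `H \ K`, and `u, v` cannot both lie in `K`,
so `K` is a clique separator.
-/

open SimpleGraph

variable {G : SimpleGraph V}

lemma subset_mHull (S : Set V) : S ⊆ MHull G S :=
  fun _ hs _ hC => hC.1 hs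

lemma mConvex_mHull (S : Set V) : MConvex G (MHull G S) :=
  fun _ _ ha hb p hp w hw C hC => hC.2 (ha C hC) (hb C hC) p hp w hw

lemma mPath_iff {a b : V} (p : G.Walk a b) :
    MPath G p ↔ p.IsPath ∧ ∀ i j : ℕ, i + 1 < j → j ≤ p.length →
      ¬ G.Adj (p.getVert i) (p.getVert j) := by
  simp only [MPath, List.get_eq_getElem, Walk.length_support, Nat.lt_succ_iff,
    Walk.support_getElem_eq_getVert]
  exact and_congr_right fun _ => forall₂_congr fun i j =>
    ⟨fun h hij hj => h hij (by omega) hj, fun h hij _ hj => h hij hj⟩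

namespace SimpleGraph.Walk

lemma exists_shorter_of_adj_getVert {a b : V} (p : G.Walk a b) {i j : ℕ} (hij : i + 1 < j)
    (hj : j ≤ p.length) (hadj : G.Adj (p.getVert i) (p.getVert j)) :
    ∃ q : G.Walk a b, q.length < p.length ∧ ∀ w ∈ q.support, w ∈ p.support := by
  refine ⟨(p.take i).append (.cons hadj (p.drop j)), ?_, fun w hw => ?_⟩
  · simp only [length_append, length_cons, take_length, drop_length]
    omega
  · rw [mem_support_append_iff, support_cons, List.mem_cons] at hw
    rcases hw with hw | rfl | hw
    · exact (p.isSubwalk_take i).support_subset hw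
    · exact p.getVert_mem_support i
    · exact (p.isSubwalk_drop j).support_subset hw

lemma exists_mPath_of_support_subset {T : Set V} {a b : V} (p : G.Walk a b)
    (hp : ∀ w ∈ p.support, w ∈ T) :
    ∃ q : G.Walk a b, MPath G q ∧ ∀ w ∈ q.support, w ∈ T := by
  classical
  induction hn : p.length using Nat.strong_induction_on generalizing p with
  | _ n ih =>
  have hbp : ∀ w ∈ p.bypass.support, w ∈ T :=
    fun w hw => hp w (p.support_bypass_subset_support hw)
  by_cases hm : MPath G p.bypass
  · exact ⟨_, hm, hbp⟩
  obtain ⟨i, j, hij, hj, hadj⟩ : ∃ i j : ℕ, i + 1 < j ∧ j ≤ p.bypass.length ∧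
      G.Adj (p.bypass.getVert i) (p.bypass.getVert j) := by
    simpa [mPath_iff, p.bypass_isPath] using hm
  obtain ⟨q, hlt, hq⟩ := p.bypass.exists_shorter_of_adj_getVert hij hj hadj
  exact ih _ (hn ▸ hlt.trans_le p.length_bypass_le_length) q (fun w hw => hbp w (hq w hw)) rfl

lemma exists_mem_support_ne_ne {a b : V} (p : G.Walk a b) (hab : a ≠ b)
    (hadj : ¬ G.Adj a b) : ∃ w ∈ p.support, w ≠ a ∧ w ≠ b := by
  cases p with
  | nil => exact absurd rfl hab
  | @cons _ m _ h q => exact ⟨m, by simp, h.ne.symm, by rintro rfl; exact hadj h⟩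

end SimpleGraph.Walk

def outsideComponent (G : SimpleGraph V) (H : Set V) (x : V) : Set V :=
  {y | ∃ p : G.Walk x y, ∀ w ∈ p.support, w ∉ H}

def outsideBoundary (G : SimpleGraph V) (H : Set V) (x : V) : Set V :=
  {s | s ∈ H ∧ ∃ c ∈ outsideComponent G H x, G.Adj s c}

variable {H : Set V} {x : V}

lemma mem_outsideComponent_self (hx : x ∉ H) : x ∈ outsideComponent G H x :=
  ⟨.nil, by simpa using hx⟩

lemma notMem_of_mem_outsideComponent {y : V} (hy : y ∈ outsideComponent G H x) : y ∉ H :=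
  let ⟨p, hp⟩ := hy; hp y p.end_mem_support

lemma mem_outsideComponent_of_adj {y z : V} (hy : y ∈ outsideComponent G H x) (hz : z ∉ H)
    (hyz : G.Adj y z) : z ∈ outsideComponent G H x := by
  obtain ⟨p, hp⟩ := hy
  refine ⟨p.concat hyz, fun w hw => ?_⟩
  rw [Walk.support_concat, List.mem_append, List.mem_singleton] at hw
  rcases hw with hw | rfl
  · exact hp w hw
  · exact hz

lemma exists_walk_of_mem_outsideBoundary {a b : V} (ha : a ∈ outsideBoundary G H x)
    (hb : b ∈ outsideBoundary G H x) :
    ∃ p : G.Walk a b, ∀ w ∈ p.support, w ∉ H ∨ w = a ∨ w = b := by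
  obtain ⟨-, c₁, ⟨p₁, hp₁⟩, hac₁⟩ := ha
  obtain ⟨-, c₂, ⟨p₂, hp₂⟩, hbc₂⟩ := hb
  refine ⟨.cons hac₁ ((p₁.reverse.append p₂).concat hbc₂.symm), fun w hw => ?_⟩
  simp only [Walk.support_cons, Walk.support_concat, Walk.support_append, Walk.support_reverse,
    List.mem_cons, List.mem_append, List.mem_reverse, List.mem_nil_iff, or_false] at hw
  rcases hw with rfl | (hw | hw) | rfl
  · exact .inr (.inl rfl)
  · exact .inl (hp₁ w hw)
  · exact .inl (hp₂ w (List.mem_of_mem_tail hw))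
  · exact .inr (.inr rfl)

lemma MConvex.isClique_outsideBoundary (hH : MConvex G H) :
    G.IsClique (outsideBoundary G H x) := by
  intro a ha b hb hab
  by_contra hnadj
  obtain ⟨p, hp⟩ := exists_walk_of_mem_outsideBoundary ha hb
  obtain ⟨q, hq, hqp⟩ := p.exists_mPath_of_support_subset hp
  obtain ⟨w, hw, hwa, hwb⟩ := q.exists_mem_support_ne_ne hab hnadj
  rcases hqp w hw with hwH | rfl | rfl
  · exact hwH (hH ha.1 hb.1 q hq w hw)
  · exact hwa rfl
  · exact hwb rfl

lemma exists_mem_support_mem_outsideBoundary {y z : V} (p : G.Walk y z)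
    (hy : y ∈ outsideComponent G H x) (hz : z ∈ H) :
    ∃ w ∈ p.support, w ∈ outsideBoundary G H x := by
  induction p with
  | nil => exact absurd hz (notMem_of_mem_outsideComponent hy)
  | @cons y m z h q ih =>
    by_cases hm : m ∈ H
    · exact ⟨m, by simp, hm, y, hy, h.symm⟩
    · obtain ⟨w, hw, hwK⟩ := ih (mem_outsideComponent_of_adj hy hm h) hz
      exact ⟨w, List.mem_cons_of_mem _ hw, hwK⟩

lemma separates_outsideBoundary (hx : x ∉ H) {z : V} (hz : z ∈ H)
    (hzK : z ∉ outsideBoundary G H x) : Separates G (outsideBoundary G H x) x z :=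
  ⟨fun hxK => hx hxK.1, hzK,
    fun p => exists_mem_support_mem_outsideBoundary p (mem_outsideComponent_self hx) hz⟩

lemma MConvex.eq_univ_of_isPrime (hprime : IsPrime G) (hH : MConvex G H) {u v : V}
    (hu : u ∈ H) (hv : v ∈ H) (huv : u ≠ v) (hadj : ¬ G.Adj u v) : H = univ := by
  refine eq_univ_of_forall fun x => by_contra fun hx => hprime ?_
  have hclique : G.IsClique (outsideBoundary G H x) := hH.isClique_outsideBoundary
  obtain ⟨z, hz, hzK⟩ : ∃ z ∈ H, z ∉ outsideBoundary G H x := by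
    by_cases huK : u ∈ outsideBoundary G H x
    · exact ⟨v, hv, fun hvK => hadj (hclique huK hvK huv)⟩
    · exact ⟨u, hu, huK⟩
  exact ⟨_, hclique, x, z, separates_outsideBoundary hx hz hzK⟩

theorem stmt_5_general (G : SimpleGraph V)
    (hprime : IsPrime G) (u v : V) (huv : u ≠ v) (hadj : ¬ G.Adj u v) :
    MHull G {u, v} = Set.univ :=
  (mConvex_mHull _).eq_univ_of_isPrime hprime (subset_mHull _ (by simp))
    (subset_mHull _ (by simp)) huv hadj

theorem stmt_5 [Fintype V] (G : SimpleGraph V) (hconn : G.Connected)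
    (hprime : IsPrime G) (u v : V) (huv : u ≠ v) (hadj : ¬ G.Adj u v) :
    MHull G {u, v} = Set.univ :=
  stmt_5_general G hprime u v huv hadj
end

section
/- In a prime graph G, any two distinct proper t-convex sets share at most one vertex. -/
open Set

variable {V : Type*}

/-!
In a prime graph every proper t-convex set `S` is a clique: the neighbourhood in `S` of a
component of `G - S` is a clique (two of its vertices are joined through the component, and
shortcutting chords yields a triangle path whose interior would lie in `S`), so by primality
it cannot separate, which forces it to be all of `S`. If two such cliques shared distinct
vertices `a`, `b`, every other vertex `x` of either one would lie on the triangle path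
`a x b`, hence in the other.
-/

namespace SimpleGraph.Walk

variable {G : SimpleGraph V} {u v : V}

lemma IsPath.eq_or_adj_of_forall_mem_support {p : G.Walk u v} (hp : p.IsPath)
    (h : ∀ w ∈ p.support, w = u ∨ w = v) : u = v ∨ G.Adj u v := by
  match p, hp, h with
  | .nil, _, _ => exact .inl rfl
  | .cons hadj .nil, _, _ => exact .inr hadj
  | .cons (v := z) _ (.cons _ q), hp, h =>
    exfalso
    rw [cons_isPath_iff, cons_isPath_iff] at hp
    rcases h z (by simp) with hzu | hzv
    · exact hp.2 (hzu ▸ (cons _ q).start_mem_support)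
    · exact hp.1.2 (hzv ▸ q.end_mem_support)

lemma exists_length_lt_of_adj_getVert (p : G.Walk u v) {i j : ℕ} (hij : i + 1 < j)
    (hj : j ≤ p.length) (hadj : G.Adj (p.getVert i) (p.getVert j)) :
    ∃ q : G.Walk u v, q.length < p.length ∧ q.support ⊆ p.support := by
  refine ⟨(p.take i).append (cons hadj (p.drop j)), ?_, ?_⟩
  · simp only [length_append, take_length, length_cons, drop_length]
    omega
  · intro w hw
    rw [mem_support_append_iff, support_cons, List.mem_cons] at hw
    rcases hw with hw | rfl | hw
    · exact (isSubwalk_take p i).support_subset hw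
    · exact p.getVert_mem_support i
    · exact (isSubwalk_drop p j).support_subset hw

lemma exists_adj_getVert_of_not_tPath {p : G.Walk u v} (hp : p.IsPath) (h : ¬ TPath G p) :
    ∃ i j, i + 2 < j ∧ j ≤ p.length ∧ G.Adj (p.getVert i) (p.getVert j) := by
  simp only [TPath, hp, true_and, not_forall, not_not] at h
  obtain ⟨i, j, hij, hi, hj, hadj⟩ := h
  refine ⟨i, j, hij, by simpa using hj, ?_⟩
  simpa only [List.get_eq_getElem, support_getElem_eq_getVert] using hadj

lemma tPath_of_length_le_two {p : G.Walk u v} (hp : p.IsPath) (h : p.length ≤ 2) :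
    TPath G p :=
  ⟨hp, fun _ _ hij _ hj => by rw [length_support] at hj; omega⟩

end SimpleGraph.Walk

open SimpleGraph Walk

variable {G : SimpleGraph V} {S : Set V}

lemma TConvex.eq_or_adj_of_walk (hS : TConvex G S) {x y : V} (hx : x ∈ S) (hy : y ∈ S)
    (p : G.Walk x y) (hp : ∀ w ∈ p.support, w ∈ S → w = x ∨ w = y) : x = y ∨ G.Adj x y := by
  classical
  induction hn : p.length using Nat.strong_induction_on generalizing p with
  | _ n ih =>
  have hpath := p.bypass_isPath
  by_cases hT : TPath G p.bypass
  · exact hpath.eq_or_adj_of_forall_mem_support fun w hw =>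
      hp w (p.support_bypass_subset_support hw) (hS hx hy _ hT w hw)
  · obtain ⟨i, j, hij, hj, hadj⟩ := exists_adj_getVert_of_not_tPath hpath hT
    obtain ⟨q, hlen, hsub⟩ := p.bypass.exists_length_lt_of_adj_getVert (by omega) hj hadj
    exact ih q.length (hn ▸ hlen.trans_le p.length_bypass_le_length) q
      (fun w hw => hp w (p.support_bypass_subset_support (hsub hw))) rfl

lemma TConvex.mem_of_isClique (hS : TConvex G S) {T : Set V} (hT : G.IsClique T) {a b : V}
    (haS : a ∈ S) (hbS : b ∈ S) (haT : a ∈ T) (hbT : b ∈ T) (hab : a ≠ b) {x : V}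
    (hxT : x ∈ T) : x ∈ S := by
  by_cases hxa : x = a
  · exact hxa ▸ haS
  by_cases hxb : x = b
  · exact hxb ▸ hbS
  let p : G.Walk a b := cons (hT haT hxT (Ne.symm hxa)) (cons (hT hxT hbT hxb) nil)
  have hp : p.IsPath := by simp [p, hab, Ne.symm hxa, hxb]
  exact hS haS hbS p (tPath_of_length_le_two hp le_rfl) x (by simp [p])

def reachAvoiding (G : SimpleGraph V) (S : Set V) (c : V) : Set V :=
  {v | ∃ p : G.Walk c v, ∀ w ∈ p.support, w ∉ S}

section reachAvoiding

variable {c : V}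

lemma notMem_of_mem_reachAvoiding {v : V} (hv : v ∈ reachAvoiding G S c) : v ∉ S :=
  let ⟨p, hp⟩ := hv
  hp v p.end_mem_support

lemma mem_reachAvoiding_of_adj {u v : V} (hu : u ∈ reachAvoiding G S c) (hv : v ∉ S)
    (hadj : G.Adj u v) : v ∈ reachAvoiding G S c := by
  obtain ⟨p, hp⟩ := hu
  refine ⟨p.concat hadj, fun w hw => ?_⟩
  rw [support_concat, List.mem_append, List.mem_singleton] at hw
  rcases hw with hw | rfl
  exacts [hp w hw, hv]

lemma exists_mem_support_adj_reachAvoiding {u v : V} (p : G.Walk u v)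
    (hu : u ∈ reachAvoiding G S c) (hv : v ∉ reachAvoiding G S c) :
    ∃ w ∈ p.support, w ∈ S ∧ ∃ d ∈ reachAvoiding G S c, G.Adj w d := by
  induction p with
  | nil => exact absurd hu hv
  | @cons u b v hadj q ih =>
    by_cases hb : b ∈ S
    · exact ⟨b, by simp, hb, u, hu, hadj.symm⟩
    · obtain ⟨w, hw, hwS, hwd⟩ := ih (mem_reachAvoiding_of_adj hu hb hadj) hv
      exact ⟨w, by simp [hw], hwS, hwd⟩

lemma TConvex.isClique_neighbors_reachAvoiding (hS : TConvex G S) :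
    G.IsClique {s | s ∈ S ∧ ∃ d ∈ reachAvoiding G S c, G.Adj s d} := by
  rintro x ⟨hxS, d₁, ⟨p₁, hp₁⟩, hxd₁⟩ y ⟨hyS, d₂, ⟨p₂, hp₂⟩, hyd₂⟩ hxy
  let r : G.Walk x y := cons hxd₁ ((p₁.reverse.append p₂).concat hyd₂.symm)
  refine (hS.eq_or_adj_of_walk hxS hyS r fun w hw hwS => ?_).resolve_left hxy
  simp only [r, support_cons, support_concat, mem_support_append_iff, support_reverse,
    List.mem_cons, List.mem_append, List.mem_reverse, List.mem_nil_iff, or_false] at hw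
  rcases hw with rfl | (hw | hw) | rfl
  · exact .inl rfl
  · exact absurd hwS (hp₁ w hw)
  · exact absurd hwS (hp₂ w hw)
  · exact .inr rfl

end reachAvoiding

lemma TConvex.isClique (hprime : IsPrime G) (hS : TConvex G S) (hS' : S ≠ Set.univ) :
    G.IsClique S := by
  obtain ⟨c, hc⟩ := (Set.ne_univ_iff_exists_notMem S).mp hS'
  have hcR : c ∈ reachAvoiding G S c := ⟨nil, by simpa using hc⟩
  have hN := hS.isClique_neighbors_reachAvoiding (c := c)
  have hcover : ∀ z, z ∈ reachAvoiding G S c ∨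
      z ∈ {s | s ∈ S ∧ ∃ d ∈ reachAvoiding G S c, G.Adj s d} := by
    by_contra! ⟨z, hzR, hzN⟩
    exact hprime ⟨_, hN, c, z, fun h => hc h.1, hzN,
      fun p => exists_mem_support_adj_reachAvoiding p hcR hzR⟩
  refine hN.subset fun x hx => (hcover x).resolve_left fun h => ?_
  exact notMem_of_mem_reachAvoiding h hx

theorem stmt_8_general (G : SimpleGraph V)
    (hprime : IsPrime G) (S₁ S₂ : Set V)
    (h₁ : TConvex G S₁) (h₁' : S₁ ≠ Set.univ)
    (h₂ : TConvex G S₂) (h₂' : S₂ ≠ Set.univ)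
    (hne : S₁ ≠ S₂) :
    (S₁ ∩ S₂).Subsingleton := by
  intro a ha b hb
  by_contra hab
  have h₁₂ : S₁ ⊆ S₂ := fun _ hx =>
    h₂.mem_of_isClique (h₁.isClique hprime h₁') ha.2 hb.2 ha.1 hb.1 hab hx
  have h₂₁ : S₂ ⊆ S₁ := fun _ hx =>
    h₁.mem_of_isClique (h₂.isClique hprime h₂') ha.1 hb.1 ha.2 hb.2 hab hx
  exact hne (h₁₂.antisymm h₂₁)

theorem stmt_8 [Fintype V] (G : SimpleGraph V) (hconn : G.Connected)
    (hprime : IsPrime G) (S₁ S₂ : Set V)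
    (h₁ : TConvex G S₁) (h₁' : S₁ ≠ Set.univ)
    (h₂ : TConvex G S₂) (h₂' : S₂ ≠ Set.univ)
    (hne : S₁ ≠ S₂) :
    (S₁ ∩ S₂).Subsingleton :=
  stmt_8_general G hprime S₁ S₂ h₁ h₁' h₂ h₂' hne
end
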